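/- Let V ∈ C²(T), 0 < α ≤ 2, c_j > 0, and fix (a_1,...,a_n,b_1,...,b_n) ∈ R^{2n}. Let l = −min_{x∈T}(∑_{k=1}^n (a_k cos(2πkx) + b_k sin(2πkx)) − V(x)). Define g(a_0) = ∫_T c_j (a_0 + ∑_k (a_k cos(2πky) + b_k sin(2πky)) − V(y))^{−1/α} dy for a_0 > l. Then g is strictly decreasing on (l, ∞), g(a_0) → ∞ as a_0 → l⁺, and g(a_0) → 0 as a_0 → ∞. Consequently, there exists a unique a_0 = ω(a', b) ∈ (l, ∞) with g(a_0) = 1. -/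

import Mathlib

open Real Filter

/-!
With `f = ∑ … - V` and `σ = a₀ - l`, the base of the integrand is `σ + (f + l)` where `f + l ≥ 0`.
Monotonicity in `a₀` and the decay `g(a₀) ≤ c (a₀ - l)^(-1/α)` are immediate. For the blow-up, `f` attains its minimum `-l` at
some `x₀` (periodicity), where `f'(x₀) = 0`, so `f + l ≤ (k t)²` at `x₀ + t`. Since `1/α ≥ 1/2`,
on the part of the period where the base is at most `1` the integrand is at least
`(σ + (k t)²)^(-1/2) ≥ (√σ + k t)⁻¹`, whose integral `log((√σ + kδ)/√σ)/k` diverges as `σ → 0⁺`.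
Existence and uniqueness of the root of `g = 1` then follow from continuity and the intermediate
value theorem.
-/

open Set Function Topology

noncomputable def trigPoly (n : ℕ) (a b : ℕ → ℝ) (x : ℝ) : ℝ :=
  ∑ k ∈ Finset.Icc 1 n, (a k * cos (2 * π * k * x) + b k * sin (2 * π * k * x))

theorem contDiff_trigPoly (n : ℕ) (a b : ℕ → ℝ) {m : WithTop ℕ∞} :
    ContDiff ℝ m (trigPoly n a b) :=
  ContDiff.sum fun _ _ => by fun_prop

theorem periodic_trigPoly (n : ℕ) (a b : ℕ → ℝ) : Periodic (trigPoly n a b) 1 := by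
  intro x
  refine Finset.sum_congr rfl fun k _ => ?_
  rw [show 2 * π * k * (x + 1) = 2 * π * k * x + (k : ℤ) * (2 * π) by push_cast; ring,
    cos_add_int_mul_two_pi, sin_add_int_mul_two_pi]

theorem Function.Periodic.exists_eq_of_isGLB {f : ℝ → ℝ} {c m : ℝ} (hper : Periodic f c)
    (hc : c ≠ 0) (hf : Continuous f) (hm : IsGLB (range f) m) : ∃ x, f x = m :=
  hm.mem_of_isClosed (range_nonempty f) (hper.compact_of_continuous hc hf).isClosed

theorem ContDiff.sub_le_mul_sq_of_deriv_eq_zero {f : ℝ → ℝ} (hf : ContDiff ℝ 2 f) {x₀ y M : ℝ}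
    (hxy : x₀ ≤ y) (hM₀ : 0 ≤ M) (hd : deriv f x₀ = 0)
    (hM : ∀ z ∈ Icc x₀ y, deriv (deriv f) z ≤ M) : f y - f x₀ ≤ M * (y - x₀) ^ 2 := by
  have hf' : ContDiff ℝ 1 (deriv f) := hf.iterate_deriv' 1 1
  have hslope : ∀ z ∈ Icc x₀ y, deriv f z ≤ M * (y - x₀) := by
    intro z hz
    have := (convex_Icc x₀ y).image_sub_le_mul_sub_of_deriv_le
      (hf'.continuous.continuousOn) (hf'.differentiable one_ne_zero).differentiableOn
      (fun w hw => hM w (interior_subset hw)) x₀ (left_mem_Icc.2 hxy) z hz hz.1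
    rw [hd, sub_zero] at this
    nlinarith [hz.2]
  have := (convex_Icc x₀ y).image_sub_le_mul_sub_of_deriv_le
    (hf.continuous.continuousOn) (hf.differentiable (by norm_num)).differentiableOn
    (fun w hw => hslope w (interior_subset hw)) x₀ (left_mem_Icc.2 hxy) y (right_mem_Icc.2 hxy) hxy
  linarith

theorem ContDiff.exists_le_add_sq_of_deriv_eq_zero {f : ℝ → ℝ} (hf : ContDiff ℝ 2 f) {x₀ : ℝ}
    (hd : deriv f x₀ = 0) : ∃ k ≥ 1, ∀ t ∈ Icc (0 : ℝ) 1, f (x₀ + t) ≤ f x₀ + (k * t) ^ 2 := by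
  have hf'' : Continuous (deriv (deriv f)) := (hf.iterate_deriv' 0 2).continuous
  obtain ⟨C, hC⟩ :=
    isCompact_Icc.exists_bound_of_continuousOn (hf''.continuousOn (s := Icc x₀ (x₀ + 1)))
  set k := max C 1
  have hk : 1 ≤ k := le_max_right C 1
  refine ⟨k, hk, fun t ht => ?_⟩
  have hbound : ∀ z ∈ Icc x₀ (x₀ + t), deriv (deriv f) z ≤ k ^ 2 := fun z hz =>
    calc deriv (deriv f) z ≤ C := (le_abs_self _).trans
            (hC z ⟨hz.1, hz.2.trans (by linarith [ht.2])⟩)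
      _ ≤ k := le_max_left C 1
      _ ≤ k ^ 2 := by nlinarith
  have := hf.sub_le_mul_sq_of_deriv_eq_zero (by linarith [ht.1]) (sq_nonneg k) hd hbound
  rw [add_sub_cancel_left] at this
  linarith [mul_pow k t 2]

theorem integral_inv_add_mul {s k δ : ℝ} (hs : 0 < s) (hk : 0 < k) (hδ : 0 ≤ δ) :
    ∫ t in (0 : ℝ)..δ, (s + k * t)⁻¹ = log ((s + k * δ) / s) / k := by
  rw [intervalIntegral.integral_comp_add_mul (fun x => x⁻¹) hk.ne',
    integral_inv_of_pos (by simpa using hs) (by positivity)]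
  simp [div_eq_inv_mul]

theorem tendsto_integral_inv_add_mul_nhdsGT {k δ : ℝ} (hk : 0 < k) (hδ : 0 < δ) :
    Tendsto (fun s => ∫ t in (0 : ℝ)..δ, (s + k * t)⁻¹) (𝓝[>] 0) atTop := by
  have hratio : Tendsto (fun s => (s + k * δ) / s) (𝓝[>] 0) atTop := by
    refine (tendsto_atTop_add_const_left _ 1
      (tendsto_inv_nhdsGT_zero.const_mul_atTop (mul_pos hk hδ))).congr' ?_
    filter_upwards [self_mem_nhdsWithin] with s hs
    field_simp [(mem_Ioi.1 hs).ne']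
  refine ((tendsto_log_atTop.comp hratio).atTop_div_const hk).congr' ?_
  filter_upwards [self_mem_nhdsWithin] with s hs
  exact (integral_inv_add_mul hs hk hδ.le).symm

theorem inv_le_rpow_neg_of_le_sq {u c p : ℝ} (hu : 0 < u) (hu1 : u ≤ 1) (hc : 0 < c)
    (huc : u ≤ c ^ 2) (hp : 1 / 2 ≤ p) : c⁻¹ ≤ u ^ (-p) :=
  calc c⁻¹ = (c ^ 2) ^ (-(1 / 2 : ℝ)) := by
        rw [← rpow_natCast, ← rpow_mul hc.le]; norm_num [rpow_neg_one]
    _ ≤ u ^ (-(1 / 2 : ℝ)) := rpow_le_rpow_of_nonpos hu huc (by norm_num)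
    _ ≤ u ^ (-p) := rpow_le_rpow_of_exponent_ge hu hu1 (by linarith)

theorem StrictAntiOn.existsUnique_eq_of_tendsto {g : ℝ → ℝ} {l L c : ℝ}
    (hanti : StrictAntiOn g (Ioi l)) (hcont : ContinuousOn g (Ioi l))
    (hleft : Tendsto g (𝓝[>] l) atTop) (hright : Tendsto g atTop (𝓝 L)) (hc : L < c) :
    ∃! a, a ∈ Ioi l ∧ g a = c := by
  obtain ⟨s, hgs, hs⟩ := ((hleft.eventually_gt_atTop c).and self_mem_nhdsWithin).exists
  obtain ⟨t, hgt, hst⟩ := ((hright.eventually_lt_const hc).and (eventually_gt_atTop s)).exists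
  have hsub : Icc s t ⊆ Ioi l := fun z hz => lt_of_lt_of_le hs hz.1
  obtain ⟨a, ha, hga⟩ := intermediate_value_Icc' hst.le (hcont.mono hsub) ⟨hgt.le, hgs.le⟩
  exact ⟨a, ⟨hsub ha, hga⟩, fun b hb => hanti.injOn hb.1 (hsub ha) (hb.2.trans hga.symm)⟩

noncomputable def negPowIntegral (f : ℝ → ℝ) (p a : ℝ) : ℝ :=
  ∫ y in (0 : ℝ)..1, (a + f y) ^ (-p)

section negPowIntegral

variable {f : ℝ → ℝ} {l p a : ℝ}

theorem continuous_add_rpow (hf : Continuous f) (hl : ∀ y, -l ≤ f y) (ha : l < a) :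
    Continuous fun y => (a + f y) ^ (-p) :=
  (hf.const_add a).rpow_const fun y => Or.inl (by linarith [hl y])

theorem negPowIntegral_nonneg (hl : ∀ y, -l ≤ f y) (ha : l < a) : 0 ≤ negPowIntegral f p a :=
  intervalIntegral.integral_nonneg zero_le_one fun y _ => rpow_nonneg (by linarith [hl y]) _

theorem negPowIntegral_le (hf : Continuous f) (hl : ∀ y, -l ≤ f y) (hp : 0 ≤ p) (ha : l < a) :
    negPowIntegral f p a ≤ (a - l) ^ (-p) := by
  calc negPowIntegral f p a ≤ ∫ _ in (0 : ℝ)..1, (a - l) ^ (-p) :=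
        intervalIntegral.integral_mono_on zero_le_one
          ((continuous_add_rpow hf hl ha).intervalIntegrable _ _) intervalIntegrable_const
          fun y _ => rpow_le_rpow_of_nonpos (by linarith) (by linarith [hl y]) (by linarith)
    _ = (a - l) ^ (-p) := by simp

theorem negPowIntegral_strictAntiOn (hf : Continuous f) (hl : ∀ y, -l ≤ f y) (hp : 0 < p) :
    StrictAntiOn (negPowIntegral f p) (Ioi l) := fun a ha b hb hab =>
  intervalIntegral.integral_lt_integral_of_continuousOn_of_le_of_exists_lt zero_lt_one
    (continuous_add_rpow hf hl hb).continuousOn (continuous_add_rpow hf hl ha).continuousOn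
    (fun y _ => rpow_le_rpow_of_nonpos (by linarith [hl y, mem_Ioi.1 ha]) (by linarith)
      (by linarith))
    ⟨0, left_mem_Icc.2 zero_le_one,
      rpow_lt_rpow_of_neg (by linarith [hl 0, mem_Ioi.1 ha]) (by linarith) (by linarith)⟩

theorem continuousOn_negPowIntegral (hf : Continuous f) (hl : ∀ y, -l ≤ f y) :
    ContinuousOn (negPowIntegral f p) (Ioi l) := by
  rw [continuousOn_iff_continuous_domRestrict]
  refine intervalIntegral.continuous_parametric_intervalIntegral_of_continuous' ?_ 0 1
  exact ((continuous_subtype_val.comp continuous_fst).add (hf.comp continuous_snd)).rpow_const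
    fun x => Or.inl (by simp only [Pi.add_apply, comp_apply]; linarith [hl x.2, mem_Ioi.1 x.1.2])

theorem tendsto_negPowIntegral_atTop (hf : Continuous f) (hl : ∀ y, -l ≤ f y) (hp : 0 < p) :
    Tendsto (negPowIntegral f p) atTop (𝓝 0) := by
  have hbound : Tendsto (fun a => (a - l) ^ (-p)) atTop (𝓝 0) :=
    (tendsto_rpow_neg_atTop hp).comp (tendsto_atTop_add_const_right _ _ tendsto_id)
  refine tendsto_of_tendsto_of_tendsto_of_le_of_le' tendsto_const_nhds hbound ?_ ?_ <;>
    filter_upwards [eventually_gt_atTop l] with a ha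
  exacts [negPowIntegral_nonneg hl ha, negPowIntegral_le hf hl hp.le ha]

theorem integral_inv_le_negPowIntegral (hf : Continuous f) (hper : Periodic f 1)
    (hl : ∀ y, -l ≤ f y) (hp : 1 / 2 ≤ p) {x₀ k δ s : ℝ} (hk : 0 < k) (hδ : 0 ≤ δ)
    (hδ1 : δ ≤ 1) (hkδ : k * δ ≤ 1 / 2) (hquad : ∀ t ∈ Icc 0 δ, f (x₀ + t) ≤ -l + (k * t) ^ 2)
    (hs : 0 < s) (hs1 : s ≤ 1 / 2) :
    ∫ t in (0 : ℝ)..δ, (s + k * t)⁻¹ ≤ negPowIntegral f p (l + s ^ 2) := by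
  set F := fun y => (l + s ^ 2 + f y) ^ (-p)
  have hFc : Continuous F := continuous_add_rpow hf hl (lt_add_of_pos_right l (pow_pos hs 2))
  have hFc' : Continuous fun t => F (x₀ + t) := hFc.comp (continuous_const_add x₀)
  have hFper : Periodic F 1 := fun y => by simp only [F, hper y]
  have hshift : negPowIntegral f p (l + s ^ 2) = ∫ t in (0 : ℝ)..1, F (x₀ + t) := by
    rw [intervalIntegral.integral_comp_add_left, add_zero, hFper.intervalIntegral_add_eq x₀ 0,
      zero_add]
    rfl
  have hpos : ∀ t, 0 < l + s ^ 2 + f (x₀ + t) := fun t => by nlinarith [hl (x₀ + t)]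
  have hint : IntervalIntegrable (fun t => (s + k * t)⁻¹) MeasureTheory.volume 0 δ := by
    refine (ContinuousOn.inv₀ (by fun_prop) fun t ht => ?_).intervalIntegrable
    rw [uIcc_of_le hδ] at ht
    nlinarith [ht.1]
  rw [hshift]
  refine (intervalIntegral.integral_mono_on hδ hint (hFc'.intervalIntegrable _ _)
    fun t ht => ?_).trans (intervalIntegral.integral_mono_interval le_rfl hδ hδ1
      (Eventually.of_forall fun t => rpow_nonneg (hpos t).le _) (hFc'.intervalIntegrable _ _))
  have hkt : 0 ≤ k * t := mul_nonneg hk.le ht.1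
  have hkt' : k * t ≤ 1 / 2 := hkδ.trans' (mul_le_mul_of_nonneg_left ht.2 hk.le)
  have := hquad t ht
  exact inv_le_rpow_neg_of_le_sq (hpos t) (by nlinarith) (by positivity) (by nlinarith) hp

theorem tendsto_negPowIntegral_nhdsGT (hf : ContDiff ℝ 2 f) (hper : Periodic f 1)
    (hl : IsGLB (range f) (-l)) (hp : 1 / 2 ≤ p) :
    Tendsto (negPowIntegral f p) (𝓝[>] l) atTop := by
  have hlow : ∀ y, -l ≤ f y := fun y => hl.1 ⟨y, rfl⟩
  obtain ⟨x₀, hx₀⟩ := hper.exists_eq_of_isGLB one_ne_zero hf.continuous hl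
  have hmin : IsLocalMin f x₀ := Eventually.of_forall fun y => hx₀ ▸ hlow y
  obtain ⟨k, hk, hquad⟩ := hf.exists_le_add_sq_of_deriv_eq_zero hmin.deriv_eq_zero
  have hk0 : 0 < k := by linarith
  set δ := (2 * k)⁻¹
  have hδ : 0 < δ := by positivity
  have hδ1 : δ ≤ 1 := inv_le_one_of_one_le₀ (by linarith)
  have hkδ : k * δ = 1 / 2 := by simp only [δ]; field_simp
  have hsqrt : Tendsto (fun a => √(a - l)) (𝓝[>] l) (𝓝[>] 0) :=
    tendsto_nhdsWithin_iff.2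
      ⟨((continuous_sqrt.comp (continuous_sub_right l)).tendsto' l 0 (by simp)).mono_left
          nhdsWithin_le_nhds,
        eventually_nhdsWithin_of_forall fun a ha => sqrt_pos.2 (sub_pos.2 ha)⟩
  refine tendsto_atTop_mono' _ ?_ ((tendsto_integral_inv_add_mul_nhdsGT hk0 hδ).comp hsqrt)
  filter_upwards [Ioo_mem_nhdsGT (show l < l + 1 / 4 by norm_num)] with a ha
  have := integral_inv_le_negPowIntegral hf.continuous hper hlow hp hk0 hδ.le hδ1 hkδ.le
    (fun t ht => hx₀ ▸ hquad t ⟨ht.1, ht.2.trans hδ1⟩) (sqrt_pos.2 (sub_pos.2 ha.1))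
    (sqrt_le_iff.2 ⟨by norm_num, by linarith [ha.2]⟩)
  rwa [sq_sqrt (sub_pos.2 ha.1).le, add_sub_cancel] at this

end negPowIntegral

theorem stmt_11 (n : ℕ) (V : ℝ → ℝ) (hV : ContDiff ℝ 2 V) (hVper : Function.Periodic V 1)
    (α cj : ℝ) (hα0 : 0 < α) (hα2 : α ≤ 2) (hcj : 0 < cj)
    (a b : ℕ → ℝ) (l : ℝ)
    (hl : IsGLB (Set.range fun x : ℝ =>
      (∑ k ∈ Finset.Icc 1 n, (a k * Real.cos (2 * π * k * x) + b k * Real.sin (2 * π * k * x)))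
        - V x) (-l))
    (g : ℝ → ℝ)
    (hg : ∀ a₀ : ℝ, g a₀ = ∫ y in (0:ℝ)..1, cj *
      (a₀ + (∑ k ∈ Finset.Icc 1 n,
        (a k * Real.cos (2 * π * k * y) + b k * Real.sin (2 * π * k * y))) - V y) ^ (-(1 / α))) :
    StrictAntiOn g (Set.Ioi l) ∧
    Tendsto g (nhdsWithin l (Set.Ioi l)) atTop ∧
    Tendsto g atTop (nhds 0) ∧
    ∃! a₀ : ℝ, a₀ ∈ Set.Ioi l ∧ g a₀ = 1 := by
  set f := trigPoly n a b - V
  have hf : ContDiff ℝ 2 f := (contDiff_trigPoly n a b).sub hV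
  have hper : Periodic f 1 := (periodic_trigPoly n a b).sub hVper
  have hlow : ∀ y, -l ≤ f y := fun y => hl.1 ⟨y, rfl⟩
  have hp : 1 / 2 ≤ 1 / α := one_div_le_one_div_of_le hα0 hα2
  have hg' : g = fun a₀ => cj * negPowIntegral f (1 / α) a₀ := by
    ext a₀
    simp only [hg, negPowIntegral, ← intervalIntegral.integral_const_mul, f, trigPoly,
      Pi.sub_apply, add_sub_assoc]
  subst hg'
  have hanti : StrictAntiOn (fun a₀ => cj * negPowIntegral f (1 / α) a₀) (Ioi l) :=
    fun x hx y hy hxy => mul_lt_mul_of_pos_left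
      (negPowIntegral_strictAntiOn hf.continuous hlow (by positivity) hx hy hxy) hcj
  have hleft := (tendsto_negPowIntegral_nhdsGT hf hper hl hp).const_mul_atTop hcj
  have hright : Tendsto (fun a₀ => cj * negPowIntegral f (1 / α) a₀) atTop (𝓝 0) := by
    simpa using (tendsto_negPowIntegral_atTop hf.continuous hlow (by positivity)).const_mul cj
  exact ⟨hanti, hleft, hright, hanti.existsUnique_eq_of_tendsto
    (continuousOn_const.mul (continuousOn_negPowIntegral hf.continuous hlow)) hleft hright one_pos⟩
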